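/- Let A be a G₁-central-simple algebra over F (finite-dimensional G₁-simple with Z(A)_e = F) and B a G₂-simple unital F-algebra. Then A ⊗_F B, with the G₁×G₂-grading (A⊗B)_{(g₁,g₂)} = A_{g₁} ⊗ B_{g₂}, is G₁×G₂-simple and Z(A⊗B)_e = Z(B)_e. In particular if B = K is a field extension of F (trivially graded), then A ⊗_F K is G₁-simple with Z(A ⊗ K)_e = K. -/

import Mathlib

open scoped TensorProduct

/-- The `G₁ × G₂`-grading on `A ⊗[F] B` given by
`(A ⊗ B)_{(g₁,g₂)} = A_{g₁} ⊗ B_{g₂}`. -/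
def tensorGrading {G₁ G₂ : Type*} [Group G₁] [Group G₂] {F : Type*} [Field F]
    {A B : Type*} [Ring A] [Algebra F A] [Ring B] [Algebra F B]
    (𝒜 : G₁ → Submodule F A) (ℬ : G₂ → Submodule F B) :
    G₁ × G₂ → Submodule F (A ⊗[F] B) :=
  fun g => Submodule.span F {x | ∃ a ∈ 𝒜 g.1, ∃ b ∈ ℬ g.2, x = a ⊗ₜ[F] b}

section proj
variable {F : Type*} [Field F] {A : Type*} [Ring A] [Algebra F A]
variable {G : Type*} [DecidableEq G]

def auxProj (𝒞 : G → Submodule F A) [DirectSum.Decomposition 𝒞] (g : G) : A →ₗ[F] A :=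
  (𝒞 g).subtype ∘ₗ (DFinsupp.lapply g) ∘ₗ (DirectSum.decomposeLinearEquiv 𝒞).toLinearMap

variable (𝒞 : G → Submodule F A) [DirectSum.Decomposition 𝒞]

lemma auxProj_apply (g : G) (a : A) : auxProj 𝒞 g a = (DirectSum.decompose 𝒞 a g : A) := rfl

lemma auxProj_same {g : G} {a : A} (h : a ∈ 𝒞 g) : auxProj 𝒞 g a = a := by
  rw [auxProj_apply, DirectSum.decompose_of_mem_same 𝒞 h]

lemma auxProj_ne {g h : G} {a : A} (ha : a ∈ 𝒞 g) (hne : g ≠ h) : auxProj 𝒞 h a = 0 := by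
  rw [auxProj_apply, DirectSum.decompose_of_mem_ne 𝒞 ha hne]

lemma auxProj_mem (g : G) (a : A) : auxProj 𝒞 g a ∈ 𝒞 g := (DirectSum.decompose 𝒞 a g).2

end proj

set_option linter.unusedSectionVars false
section pi

variable {G₁ G₂ : Type*} [Group G₁] [Group G₂] [DecidableEq G₁] [DecidableEq G₂]
  {F : Type*} [Field F] {A : Type*} [Ring A] [Algebra F A]
  {B : Type*} [Ring B] [Algebra F B]
  (𝒜 : G₁ → Submodule F A) [DirectSum.Decomposition 𝒜]
  (ℬ : G₂ → Submodule F B) [DirectSum.Decomposition ℬ]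

noncomputable def auxPi (d : G₁ × G₂) : A ⊗[F] B →ₗ[F] A ⊗[F] B :=
  TensorProduct.map (auxProj 𝒜 d.1) (auxProj ℬ d.2)

lemma auxPi_tmul (d : G₁ × G₂) (a : A) (b : B) :
    auxPi 𝒜 ℬ d (a ⊗ₜ[F] b) = (auxProj 𝒜 d.1 a) ⊗ₜ[F] (auxProj ℬ d.2 b) :=
  TensorProduct.map_tmul _ _ _ _

lemma auxPi_same {d : G₁ × G₂} {x : A ⊗[F] B} (hx : x ∈ tensorGrading 𝒜 ℬ d) :
    auxPi 𝒜 ℬ d x = x := by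
  induction hx using Submodule.span_induction with
  | mem y hy =>
    obtain ⟨a, ha, b, hb, rfl⟩ := hy
    rw [auxPi_tmul, auxProj_same 𝒜 ha, auxProj_same ℬ hb]
  | zero => exact map_zero _
  | add y z _ _ hy hz => rw [map_add, hy, hz]
  | smul c y _ hy => rw [map_smul, hy]

lemma auxPi_ne {g d : G₁ × G₂} {x : A ⊗[F] B} (hx : x ∈ tensorGrading 𝒜 ℬ g)
    (hne : g ≠ d) : auxPi 𝒜 ℬ d x = 0 := by
  induction hx using Submodule.span_induction with
  | mem y hy =>
    obtain ⟨a, ha, b, hb, rfl⟩ := hy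
    rw [auxPi_tmul]
    by_cases h1 : g.1 = d.1
    · have h2 : g.2 ≠ d.2 := fun h2 => hne (Prod.ext h1 h2)
      rw [auxProj_ne ℬ hb h2, TensorProduct.tmul_zero]
    · rw [auxProj_ne 𝒜 ha h1, TensorProduct.zero_tmul]
  | zero => exact map_zero _
  | add y z _ _ hy hz => rw [map_add, hy, hz, add_zero]
  | smul c y _ hy => rw [map_smul, hy, smul_zero]

lemma auxPi_mem (d : G₁ × G₂) (x : A ⊗[F] B) : auxPi 𝒜 ℬ d x ∈ tensorGrading 𝒜 ℬ d := by
  induction x using TensorProduct.induction_on with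
  | zero => rw [map_zero]; exact Submodule.zero_mem _
  | tmul a b =>
    rw [auxPi_tmul]
    exact Submodule.subset_span ⟨_, auxProj_mem 𝒜 d.1 a, _, auxProj_mem ℬ d.2 b, rfl⟩
  | add y z hy hz => rw [map_add]; exact Submodule.add_mem _ hy hz

lemma auxPi_mem_ideal (I : TwoSidedIdeal (A ⊗[F] B))
    (hI : ∀ x ∈ I, x ∈ Submodule.span F
      {y : A ⊗[F] B | y ∈ I ∧ ∃ g : G₁ × G₂, y ∈ tensorGrading 𝒜 ℬ g})
    {x : A ⊗[F] B} (hx : x ∈ I) (d : G₁ × G₂) : auxPi 𝒜 ℬ d x ∈ I := by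
  have h := hI x hx
  clear hx
  induction h using Submodule.span_induction with
  | mem y hy =>
    obtain ⟨hyI, g, hyg⟩ := hy
    by_cases hgd : g = d
    · rw [hgd] at hyg; rw [auxPi_same 𝒜 ℬ hyg]; exact hyI
    · rw [auxPi_ne 𝒜 ℬ hyg hgd]; exact TwoSidedIdeal.zero_mem _
  | zero => rw [map_zero]; exact TwoSidedIdeal.zero_mem _
  | add y z _ _ hy hz => rw [map_add]; exact TwoSidedIdeal.add_mem _ hy hz
  | smul c y _ hy => rw [map_smul, Algebra.smul_def]; exact I.mul_mem_left _ _ hy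

end pi

section aux
variable {F : Type*} [Field F] {A B : Type*} [Ring A] [Algebra F A] [Ring B] [Algebra F B]

/-- dual functional picking out a coordinate of a linearly independent family -/
lemma aux_dual {n : ℕ} {b : Fin n → B} (hb : LinearIndependent F b) (i : Fin n) :
    ∃ φ : B →ₗ[F] F, ∀ j, φ (b j) = if j = i then 1 else 0 := by
  set S := Submodule.span F (Set.range b)
  obtain ⟨T, hT⟩ := S.exists_isCompl
  let p : B →ₗ[F] S := Submodule.linearProjOfIsCompl S T hT
  refine ⟨(Finsupp.lapply i) ∘ₗ hb.repr ∘ₗ p, fun j => ?_⟩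
  have hbj : b j ∈ S := Submodule.subset_span ⟨j, rfl⟩
  have h1 : p (b j) = ⟨b j, hbj⟩ := Submodule.linearProjOfIsCompl_apply_left hT ⟨b j, hbj⟩
  have h2 : hb.repr ⟨b j, hbj⟩ = Finsupp.single j 1 := hb.repr_eq_single j _ rfl
  simp only [LinearMap.comp_apply, h1, h2, Finsupp.lapply_apply]
  rw [Finsupp.single_apply]

lemma aux_indep_zero {n : ℕ} {a : Fin n → A} {b : Fin n → B}
    (hb : LinearIndependent F b) (h : ∑ i, a i ⊗ₜ[F] b i = 0) : ∀ i, a i = 0 := by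
  intro i
  obtain ⟨φ, hφ⟩ := aux_dual hb i
  have := congrArg ((TensorProduct.rid F A).toLinearMap ∘ₗ LinearMap.lTensor A φ) h
  simp only [map_sum, map_zero, LinearMap.comp_apply, LinearMap.lTensor_tmul,
    LinearEquiv.coe_coe, TensorProduct.rid_tmul, hφ] at this
  simpa [Finset.sum_ite_eq'] using this

lemma aux_tmul_ne_zero {a : A} {b : B} (ha : a ≠ 0) (hb : b ≠ 0) : a ⊗ₜ[F] b ≠ 0 := by
  intro h
  have hind : LinearIndependent F ![b] := by
    rw [Fintype.linearIndependent_iff]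
    intro g hg
    simp only [Fin.sum_univ_one, Matrix.cons_val_zero] at hg
    rcases smul_eq_zero.1 hg with h | h
    · intro j; simpa [Subsingleton.elim j 0] using h
    · exact absurd h hb
  have := aux_indep_zero (a := ![a]) hind (by simpa using h) 0
  exact ha (by simpa using this)

end aux

section aux
variable {F : Type*} [Field F] {A B : Type*} [Ring A] [Algebra F A] [Ring B] [Algebra F B]

lemma aux_shorten (p : Submodule F A) (q : Submodule F B) :
    ∀ (n : ℕ) (a : Fin n → A) (b : Fin n → B), (∀ i, a i ∈ p) → (∀ i, b i ∈ q) →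
    ∃ (m : ℕ) (a' : Fin m → A) (b' : Fin m → B), m ≤ n ∧ (∀ i, a' i ∈ p) ∧ (∀ i, b' i ∈ q) ∧
      LinearIndependent F b' ∧ ∑ i, a' i ⊗ₜ[F] b' i = ∑ i, a i ⊗ₜ[F] b i := by
  intro n
  induction n using Nat.strong_induction_on with
  | _ n ih =>
    intro a b ha hb
    by_cases hind : LinearIndependent F b
    · exact ⟨n, a, b, le_refl _, ha, hb, hind, rfl⟩
    obtain ⟨c, hc, j, hcj⟩ := Fintype.not_linearIndependent_iff.1 hind
    match n, a, b, ha, hb, hind, c, hc, j, hcj, ih with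
    | 0, a, b, ha, hb, hind, c, hc, j, hcj, ih => exact absurd (linearIndependent_empty_type) hind
    | (m+1), a, b, ha, hb, hind, c, hc, j, hcj, ih =>
      have hbj : b j = ∑ i : Fin m, (-((c j)⁻¹ * c (j.succAbove i))) • b (j.succAbove i) := by
        have h1 := hc
        rw [Fin.sum_univ_succAbove (fun i => c i • b i) j] at h1
        have h2 : c j • b j = ∑ i : Fin m, -(c (j.succAbove i) • b (j.succAbove i)) := by
          rw [Finset.sum_neg_distrib]; exact eq_neg_of_add_eq_zero_left h1
        have h3 := congrArg (fun x => (c j)⁻¹ • x) h2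
        simp only [smul_smul, inv_mul_cancel₀ hcj, one_smul, Finset.smul_sum, smul_neg,
          neg_smul] at h3 ⊢
        exact h3
      set a' : Fin m → A :=
        fun i => a (j.succAbove i) + (-((c j)⁻¹ * c (j.succAbove i))) • a j with ha'
      have hsum : ∑ i, a' i ⊗ₜ[F] b (j.succAbove i) = ∑ i, a i ⊗ₜ[F] b i := by
        rw [Fin.sum_univ_succAbove (fun i => a i ⊗ₜ[F] b i) j, hbj]
        rw [TensorProduct.tmul_sum]
        rw [← Finset.sum_add_distrib]
        refine Finset.sum_congr rfl fun i _ => ?_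
        rw [ha']
        rw [TensorProduct.add_tmul, TensorProduct.tmul_smul, ← TensorProduct.smul_tmul', add_comm]
      obtain ⟨m', a'', b'', hm', h1, h2, h3, h4⟩ :=
        ih m (Nat.lt_succ_self m) a' (fun i => b (j.succAbove i))
          (fun i => p.add_mem (ha _) (p.smul_mem _ (ha j))) (fun i => hb _)
      exact ⟨m', a'', b'', le_trans hm' (Nat.le_succ m), h1, h2, h3, h4.trans hsum⟩

lemma aux_rep_of_mem_span {p : Submodule F A} {q : Submodule F B} {x : A ⊗[F] B}
    (hx : x ∈ Submodule.span F {z | ∃ a ∈ p, ∃ b ∈ q, z = a ⊗ₜ[F] b}) :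
    ∃ (n : ℕ) (a : Fin n → A) (b : Fin n → B), (∀ i, a i ∈ p) ∧ (∀ i, b i ∈ q) ∧
      LinearIndependent F b ∧ x = ∑ i, a i ⊗ₜ[F] b i := by
  obtain ⟨n, f, g, hfg⟩ := Submodule.mem_span_set'.1 hx
  choose a hap b hbq hab using fun i : Fin n => (g i).2
  have hx' : x = ∑ i, (f i • a i) ⊗ₜ[F] b i := by
    rw [← hfg]
    refine Finset.sum_congr rfl fun i _ => ?_
    rw [hab i, TensorProduct.smul_tmul']
  obtain ⟨m, a', b', _, h1, h2, h3, h4⟩ :=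
    aux_shorten p q n (fun i => f i • a i) b (fun i => p.smul_mem _ (hap i)) hbq
  exact ⟨m, a', b', h1, h2, h3, by rw [hx', ← h4]⟩

end aux
section
variable {G₁ G₂ : Type*} [Group G₁] [Group G₂] [DecidableEq G₁] [DecidableEq G₂]
  {F : Type*} [Field F] {A : Type*} [Ring A] [Algebra F A]
  {B : Type*} [Ring B] [Algebra F B]

-- homogeneous decomposition of a product ideal generated by a homogeneous element is top
lemma aux_gen_top (𝒜 : G₁ → Submodule F A) [DirectSum.Decomposition 𝒜]
    (honeA : (1 : A) ∈ 𝒜 1)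
    (hmulA : ∀ {g h : G₁}, ∀ a ∈ 𝒜 g, ∀ b ∈ 𝒜 h, a * b ∈ 𝒜 (g * h))
    (hAsimple : ∀ I : TwoSidedIdeal A,
      (∀ a ∈ I, ∀ g : G₁, (DirectSum.decompose 𝒜 a g : A) ∈ I) → I = ⊥ ∨ I = ⊤)
    {g₁ : G₁} {a₀ : A} (ha₀ : a₀ ∈ 𝒜 g₁) (ha₀ne : a₀ ≠ 0) :
    (1 : A) ∈ Submodule.span F
      {z : A | ∃ (h k : G₁) (x y : A), x ∈ 𝒜 h ∧ y ∈ 𝒜 k ∧ z = x * a₀ * y} := by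
  classical
  set S : Submodule F A := Submodule.span F
      {z : A | ∃ (h k : G₁) (x y : A), x ∈ 𝒜 h ∧ y ∈ 𝒜 k ∧ z = x * a₀ * y} with hS
  have keyL : ∀ (r z : A), z ∈ S → r * z ∈ S := by
    intro r z hz
    induction hz using Submodule.span_induction with
    | mem w hw =>
      obtain ⟨h, k, x, y, hx, hy, rfl⟩ := hw
      rw [← DirectSum.sum_support_decompose 𝒜 r, Finset.sum_mul]
      refine Submodule.sum_mem _ fun g _ => ?_
      have : (DirectSum.decompose 𝒜 r g : A) * (x * a₀ * y)
          = ((DirectSum.decompose 𝒜 r g : A) * x) * a₀ * y := by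
        rw [← mul_assoc, ← mul_assoc]
      rw [this]
      exact Submodule.subset_span
        ⟨g * h, k, _, y, hmulA _ (DirectSum.decompose 𝒜 r g).2 _ hx, hy, rfl⟩
    | zero => rw [mul_zero]; exact S.zero_mem
    | add u v _ _ hu hv => rw [mul_add]; exact S.add_mem hu hv
    | smul c u _ hu => rw [mul_smul_comm]; exact S.smul_mem _ hu
  have keyR : ∀ (r z : A), z ∈ S → z * r ∈ S := by
    intro r z hz
    induction hz using Submodule.span_induction with
    | mem w hw =>
      obtain ⟨h, k, x, y, hx, hy, rfl⟩ := hw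
      rw [← DirectSum.sum_support_decompose 𝒜 r, Finset.mul_sum]
      refine Submodule.sum_mem _ fun g _ => ?_
      have : x * a₀ * y * (DirectSum.decompose 𝒜 r g : A)
          = x * a₀ * (y * (DirectSum.decompose 𝒜 r g : A)) := by
        rw [mul_assoc]
      rw [this]
      exact Submodule.subset_span
        ⟨h, k * g, x, _, hx, hmulA _ hy _ (DirectSum.decompose 𝒜 r g).2, rfl⟩
    | zero => rw [zero_mul]; exact S.zero_mem
    | add u v _ _ hu hv => rw [add_mul]; exact S.add_mem hu hv
    | smul c u _ hu => rw [smul_mul_assoc]; exact S.smul_mem _ hu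
  set K : TwoSidedIdeal A := TwoSidedIdeal.mk' S S.zero_mem (fun hx hy => S.add_mem hx hy)
    (fun hx => S.neg_mem hx) (fun {x y} hy => keyL x y hy) (fun {x y} hx => keyR y x hx) with hK
  have memK : ∀ z : A, z ∈ K ↔ z ∈ S := fun z => TwoSidedIdeal.mem_mk' _ _ _ _ _ _ z
  have hKgraded : ∀ z ∈ K, ∀ g : G₁, (DirectSum.decompose 𝒜 z g : A) ∈ K := by
    intro z hz g
    rw [memK] at hz ⊢
    induction hz using Submodule.span_induction with
    | mem w hw =>
      obtain ⟨h, k, x, y, hx, hy, rfl⟩ := hw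
      have hmem : x * a₀ * y ∈ 𝒜 (h * g₁ * k) := hmulA _ (hmulA _ hx _ ha₀) _ hy
      by_cases hg : h * g₁ * k = g
      · rw [DirectSum.decompose_of_mem_same 𝒜 (hg ▸ hmem)]
        exact Submodule.subset_span ⟨h, k, x, y, hx, hy, rfl⟩
      · rw [DirectSum.decompose_of_mem_ne 𝒜 hmem hg]
        exact S.zero_mem
    | zero => rw [DirectSum.decompose_zero]; simpa using S.zero_mem
    | add u v _ _ hu hv => rw [DirectSum.decompose_add]; simpa using S.add_mem hu hv
    | smul c u _ hu =>
      rw [DirectSum.decompose_smul]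
      simpa [DirectSum.smul_apply] using S.smul_mem c hu
  have ha₀K : a₀ ∈ K := by
    rw [memK]
    exact Submodule.subset_span ⟨1, 1, 1, 1, honeA, honeA, by rw [one_mul, mul_one]⟩
  rcases hAsimple K hKgraded with hbot | htop
  · exfalso
    rw [hbot, TwoSidedIdeal.mem_bot] at ha₀K
    exact ha₀ne ha₀K
  · have : (1 : A) ∈ K := htop ▸ TwoSidedIdeal.mem_top _
    rwa [memK] at this
end
section simple
set_option maxHeartbeats 1000000
variable {G₁ G₂ : Type*} [Group G₁] [Group G₂] [DecidableEq G₁] [DecidableEq G₂]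
  {F : Type*} [Field F] {A : Type*} [Ring A] [Algebra F A]
  {B : Type*} [Ring B] [Algebra F B]

lemma aux_simple
    (𝒜 : G₁ → Submodule F A) [DirectSum.Decomposition 𝒜]
    (honeA : (1 : A) ∈ 𝒜 1)
    (hmulA : ∀ {g h : G₁}, ∀ a ∈ 𝒜 g, ∀ b ∈ 𝒜 h, a * b ∈ 𝒜 (g * h))
    (hA2 : ∃ a b : A, a * b ≠ 0)
    (hAsimple : ∀ I : TwoSidedIdeal A,
      (∀ a ∈ I, ∀ g : G₁, (DirectSum.decompose 𝒜 a g : A) ∈ I) → I = ⊥ ∨ I = ⊤)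
    (hAcentral : ∀ a : A, a ∈ Subalgebra.center F A → a ∈ 𝒜 1 →
      ∃ c : F, a = algebraMap F A c)
    (ℬ : G₂ → Submodule F B) [DirectSum.Decomposition ℬ]
    (honeB : (1 : B) ∈ ℬ 1)
    (hBsimple : ∀ I : TwoSidedIdeal B,
      (∀ a ∈ I, ∀ g : G₂, (DirectSum.decompose ℬ a g : B) ∈ I) → I = ⊥ ∨ I = ⊤)
    (I : TwoSidedIdeal (A ⊗[F] B))
    (hI : ∀ x ∈ I, x ∈ Submodule.span F
      {y : A ⊗[F] B | y ∈ I ∧ ∃ g : G₁ × G₂, y ∈ tensorGrading 𝒜 ℬ g}) :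
    I = ⊥ ∨ I = ⊤ := by
  classical
  by_cases hbot : I = ⊥
  · exact Or.inl hbot
  right
  obtain ⟨a0, b0, hab0⟩ := hA2
  have : Nontrivial A := ⟨⟨a0 * b0, 0, hab0⟩⟩
  -- a nonzero element of I
  have hex : ∃ x, x ∈ I ∧ x ≠ 0 := by
    by_contra h
    push_neg at h
    exact hbot (TwoSidedIdeal.ext fun x =>
      ⟨fun hx => (TwoSidedIdeal.mem_bot _).2 (h x hx),
       fun hx => by rw [(TwoSidedIdeal.mem_bot _).1 hx]; exact TwoSidedIdeal.zero_mem _⟩)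
  obtain ⟨x, hxI, hxne⟩ := hex
  -- a nonzero homogeneous element of I
  have hhom : ∃ y, (y ∈ I ∧ ∃ g : G₁ × G₂, y ∈ tensorGrading 𝒜 ℬ g) ∧ y ≠ 0 := by
    by_contra h
    push_neg at h
    have hle : Submodule.span F {y : A ⊗[F] B | y ∈ I ∧ ∃ g : G₁ × G₂, y ∈ tensorGrading 𝒜 ℬ g}
        ≤ ⊥ := Submodule.span_le.2 (fun y hy => by simpa using h y hy)
    exact hxne (by simpa using hle (hI x hxI))
  obtain ⟨y₀, ⟨hy₀I, d₀, hy₀g⟩, hy₀ne⟩ := hhom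
  -- minimal length of a representation of a nonzero homogeneous element of I
  set P : ℕ → Prop := fun n => ∃ y, y ∈ I ∧ y ≠ 0 ∧
    ∃ (d : G₁ × G₂) (a : Fin n → A) (b : Fin n → B),
      (∀ i, a i ∈ 𝒜 d.1) ∧ (∀ i, b i ∈ ℬ d.2) ∧ LinearIndependent F b ∧
        y = ∑ i, a i ⊗ₜ[F] b i with hPdef
  have hPex : ∃ n, P n := by
    obtain ⟨n, a, b, h1, h2, h3, h4⟩ := aux_rep_of_mem_span hy₀g
    exact ⟨n, y₀, hy₀I, hy₀ne, d₀, a, b, h1, h2, h3, h4⟩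
  have hmin : ∀ k, k < Nat.find hPex → ¬ P k := fun k hk => Nat.find_min hPex hk
  have hspec : P (Nat.find hPex) := Nat.find_spec hPex
  have hn0 : Nat.find hPex ≠ 0 := by
    intro h
    rw [h] at hspec
    obtain ⟨y, _, hyne, d, a, b, _, _, _, hyrep⟩ := hspec
    exact hyne (by simp [hyrep])
  obtain ⟨m, hm⟩ : ∃ m, Nat.find hPex = m + 1 := Nat.exists_eq_succ_of_ne_zero hn0
  rw [hm] at hspec hmin
  obtain ⟨y, hyI, hyne, d, a, b, haM, hbM, hbind, hyrep⟩ := hspec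
  -- an index with a nonzero coefficient
  obtain ⟨j, hj⟩ : ∃ j, a j ≠ 0 := by
    by_contra h
    push_neg at h
    exact hyne (by simp [hyrep, h])
  -- use graded simplicity of A: 1 is in the ideal generated by (a j)
  have hone := aux_gen_top 𝒜 honeA hmulA hAsimple (haM j) hj
  obtain ⟨N, f, v, hfv⟩ := Submodule.mem_span_set'.1 hone
  choose hdeg kdeg xs ys hxs hys hvs using fun i : Fin N => (v i).2
  set X : Fin N → A := fun i => f i • xs i with hX
  have honeEq : ∀ w : A, ∑ k, X k * w * ys k
      = ∑ k, f k • ((xs k * w * ys k)) := by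
    intro w
    refine Finset.sum_congr rfl fun k _ => ?_
    rw [hX, smul_mul_assoc, smul_mul_assoc]
  have hone1 : ∑ k, X k * a j * ys k = 1 := by
    rw [honeEq, ← hfv]
    refine Finset.sum_congr rfl fun k _ => ?_
    rw [hvs k]
  -- build a new homogeneous element of I with coefficient 1 at j
  set y' : A ⊗[F] B := ∑ k, (X k ⊗ₜ[F] (1:B)) * y * (ys k ⊗ₜ[F] (1:B)) with hy'def
  have hy'I : y' ∈ I := TwoSidedIdeal.finsetSum_mem _ _ _ fun k _ =>
    I.mul_mem_right _ _ (I.mul_mem_left _ _ hyI)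
  have hy'rep : y' = ∑ i, (∑ k, X k * a i * ys k) ⊗ₜ[F] b i := by
    rw [hy'def]
    simp only [hyrep, Finset.mul_sum, Finset.sum_mul, Algebra.TensorProduct.tmul_mul_tmul,
      one_mul, mul_one]
    rw [Finset.sum_comm]
    refine Finset.sum_congr rfl fun i _ => ?_
    rw [TensorProduct.sum_tmul]
  set y'' : A ⊗[F] B := auxPi 𝒜 ℬ ((1 : G₁), d.2) y' with hy''def
  have hy''I : y'' ∈ I := auxPi_mem_ideal 𝒜 ℬ I hI hy'I _
  set a' : Fin (m+1) → A := fun i => auxProj 𝒜 1 (∑ k, X k * a i * ys k) with ha'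
  have hy'' : y'' = ∑ i, a' i ⊗ₜ[F] b i := by
    rw [hy''def, hy'rep, map_sum]
    refine Finset.sum_congr rfl fun i _ => ?_
    rw [auxPi_tmul, auxProj_same ℬ (hbM i)]
  have ha'mem : ∀ i, a' i ∈ 𝒜 1 := fun i => auxProj_mem 𝒜 1 _
  have ha'j : a' j = 1 := by
    show auxProj 𝒜 1 (∑ k, X k * a j * ys k) = 1
    rw [hone1]
    exact auxProj_same 𝒜 honeA
  -- commutator argument: each a' i is central
  have hhomc : ∀ (h : G₁) (r : A), r ∈ 𝒜 h → ∀ i, r * a' i - a' i * r = 0 := by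
    intro h r hr
    set za : A ⊗[F] B := (r ⊗ₜ[F] (1:B)) * y'' - y'' * (r ⊗ₜ[F] (1:B)) with hzadef
    have hzaI : za ∈ I := I.sub_mem (I.mul_mem_left _ _ hy''I) (I.mul_mem_right _ _ hy''I)
    have hzarep : za = ∑ i, (r * a' i - a' i * r) ⊗ₜ[F] b i := by
      rw [hzadef, hy'', Finset.mul_sum, Finset.sum_mul, ← Finset.sum_sub_distrib]
      refine Finset.sum_congr rfl fun i _ => ?_
      rw [Algebra.TensorProduct.tmul_mul_tmul, Algebra.TensorProduct.tmul_mul_tmul,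
        one_mul, mul_one, ← TensorProduct.sub_tmul]
    by_cases hza0 : za = 0
    · exact fun i => aux_indep_zero hbind (by rw [← hzarep, hza0]) i
    · exfalso
      refine hmin m (Nat.lt_succ_self m) ⟨za, hzaI, hza0, (h, d.2),
        fun i => r * a' (j.succAbove i) - a' (j.succAbove i) * r,
        fun i => b (j.succAbove i), fun i => ?_, fun i => hbM _,
        hbind.comp _ (Fin.succAbove_right_injective), ?_⟩
      · have h1 : r * a' (j.succAbove i) ∈ 𝒜 h := by
          simpa using hmulA _ hr _ (ha'mem (j.succAbove i))
        have h2 : a' (j.succAbove i) * r ∈ 𝒜 h := by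
          simpa using hmulA _ (ha'mem (j.succAbove i)) _ hr
        exact Submodule.sub_mem _ h1 h2
      · rw [hzarep, Fin.sum_univ_succAbove (fun i => (r * a' i - a' i * r) ⊗ₜ[F] b i) j,
          ha'j, mul_one, one_mul, sub_self, TensorProduct.zero_tmul, zero_add]
  have hcomm : ∀ i (r : A), r * a' i = a' i * r := by
    intro i r
    rw [← DirectSum.sum_support_decompose 𝒜 r, Finset.sum_mul, Finset.mul_sum]
    refine Finset.sum_congr rfl fun g _ => ?_
    exact sub_eq_zero.1 (hhomc g _ (DirectSum.decompose 𝒜 r g).2 i)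
  choose c hc using fun i =>
    hAcentral (a' i) (Subalgebra.mem_center_iff.2 fun r => hcomm i r) (ha'mem i)
  set bs : B := ∑ i, c i • b i with hbs
  have hy''b : y'' = (1:A) ⊗ₜ[F] bs := by
    rw [hy'', hbs, TensorProduct.tmul_sum]
    refine Finset.sum_congr rfl fun i _ => ?_
    rw [hc i, Algebra.algebraMap_eq_smul_one, ← TensorProduct.smul_tmul',
      ← TensorProduct.tmul_smul]
  have hy''ne : y'' ≠ 0 := by
    intro h0
    have := aux_indep_zero hbind (by rw [← hy'', h0]) j
    rw [ha'j] at this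
    exact one_ne_zero this
  have hbsne : bs ≠ 0 := fun h => hy''ne (by rw [hy''b, h, TensorProduct.tmul_zero])
  -- the ideal J = {b | 1 ⊗ b ∈ I} of B
  set SJ : Set B := {w : B | (1:A) ⊗ₜ[F] w ∈ I} with hSJ
  have hJ0 : (0:B) ∈ SJ := by
    show (1:A) ⊗ₜ[F] (0:B) ∈ I
    rw [TensorProduct.tmul_zero]; exact TwoSidedIdeal.zero_mem _
  set J : TwoSidedIdeal B := TwoSidedIdeal.mk' SJ hJ0
    (fun {u w} hu hw => by
      show (1:A) ⊗ₜ[F] (u + w) ∈ I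
      rw [TensorProduct.tmul_add]; exact I.add_mem hu hw)
    (fun {u} hu => by
      show (1:A) ⊗ₜ[F] (-u) ∈ I
      rw [TensorProduct.tmul_neg]; exact I.neg_mem hu)
    (fun {u w} hw => by
      show (1:A) ⊗ₜ[F] (u * w) ∈ I
      have : (1:A) ⊗ₜ[F] (u * w) = ((1:A) ⊗ₜ[F] u) * ((1:A) ⊗ₜ[F] w) := by
        rw [Algebra.TensorProduct.tmul_mul_tmul, one_mul]
      rw [this]; exact I.mul_mem_left _ _ hw)
    (fun {u w} hu => by
      show (1:A) ⊗ₜ[F] (u * w) ∈ I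
      have : (1:A) ⊗ₜ[F] (u * w) = ((1:A) ⊗ₜ[F] u) * ((1:A) ⊗ₜ[F] w) := by
        rw [Algebra.TensorProduct.tmul_mul_tmul, one_mul]
      rw [this]; exact I.mul_mem_right _ _ hu) with hJ
  have memJ : ∀ w : B, w ∈ J ↔ (1:A) ⊗ₜ[F] w ∈ I := fun w => TwoSidedIdeal.mem_mk' _ _ _ _ _ _ w
  have hJgraded : ∀ w ∈ J, ∀ g : G₂, (DirectSum.decompose ℬ w g : B) ∈ J := by
    intro w hw g
    rw [memJ] at hw ⊢
    have : (1:A) ⊗ₜ[F] (DirectSum.decompose ℬ w g : B) = auxPi 𝒜 ℬ ((1:G₁), g) ((1:A) ⊗ₜ[F] w) := by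
      rw [auxPi_tmul, auxProj_same 𝒜 honeA, auxProj_apply]
    rw [this]
    exact auxPi_mem_ideal 𝒜 ℬ I hI hw _
  rcases hBsimple J hJgraded with hJbot | hJtop
  · exfalso
    have : bs ∈ J := (memJ bs).2 (hy''b ▸ hy''I)
    rw [hJbot, TwoSidedIdeal.mem_bot] at this
    exact hbsne this
  · apply I.eq_top
    have : (1:B) ∈ J := hJtop ▸ TwoSidedIdeal.mem_top _
    rw [memJ] at this
    rwa [← Algebra.TensorProduct.one_def] at this

end simple
section center
variable {G₁ G₂ : Type*} [Group G₁] [Group G₂] [DecidableEq G₁] [DecidableEq G₂]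
  {F : Type*} [Field F] {A : Type*} [Ring A] [Algebra F A]
  {B : Type*} [Ring B] [Algebra F B]

lemma aux_center
    (𝒜 : G₁ → Submodule F A) [DirectSum.Decomposition 𝒜]
    (honeA : (1 : A) ∈ 𝒜 1)
    (hA2 : ∃ a b : A, a * b ≠ 0)
    (hAcentral : ∀ a : A, a ∈ Subalgebra.center F A → a ∈ 𝒜 1 →
      ∃ c : F, a = algebraMap F A c)
    (ℬ : G₂ → Submodule F B) [DirectSum.Decomposition ℬ]
    (z : A ⊗[F] B) :
    (z ∈ Subalgebra.center F (A ⊗[F] B) ∧ z ∈ tensorGrading 𝒜 ℬ 1) ↔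
      ∃ b : B, b ∈ Subalgebra.center F B ∧ b ∈ ℬ 1 ∧ z = 1 ⊗ₜ[F] b := by
  classical
  obtain ⟨a0, b0, hab0⟩ := hA2
  have : Nontrivial A := ⟨⟨a0 * b0, 0, hab0⟩⟩
  constructor
  · rintro ⟨hzc, hzg⟩
    have hzc' := Subalgebra.mem_center_iff.1 hzc
    obtain ⟨n, a, b, haM, hbM, hbind, hzrep⟩ :=
      aux_rep_of_mem_span (p := 𝒜 1) (q := ℬ 1) hzg
    -- each a i is central
    have hcomm : ∀ i (r : A), r * a i = a i * r := by
      intro i r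
      have h0 : (r ⊗ₜ[F] (1:B)) * z - z * (r ⊗ₜ[F] (1:B)) = 0 := by
        rw [hzc' (r ⊗ₜ[F] (1:B)), sub_self]
      have h1 : (r ⊗ₜ[F] (1:B)) * z - z * (r ⊗ₜ[F] (1:B))
          = ∑ i, (r * a i - a i * r) ⊗ₜ[F] b i := by
        rw [hzrep, Finset.mul_sum, Finset.sum_mul, ← Finset.sum_sub_distrib]
        refine Finset.sum_congr rfl fun i _ => ?_
        rw [Algebra.TensorProduct.tmul_mul_tmul, Algebra.TensorProduct.tmul_mul_tmul,
          one_mul, mul_one, ← TensorProduct.sub_tmul]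
      have := aux_indep_zero hbind (by rw [← h1, h0]) i
      exact sub_eq_zero.1 this
    choose c hc using fun i =>
      hAcentral (a i) (Subalgebra.mem_center_iff.2 fun r => hcomm i r) (haM i)
    refine ⟨∑ i, c i • b i, ?_, Submodule.sum_mem _ fun i _ => Submodule.smul_mem _ _ (hbM i), ?_⟩
    · -- central in B
      refine Subalgebra.mem_center_iff.2 fun r => ?_
      have h0 : ((1:A) ⊗ₜ[F] r) * z - z * ((1:A) ⊗ₜ[F] r) = 0 := by
        rw [hzc' ((1:A) ⊗ₜ[F] r), sub_self]
      have h1 : ((1:A) ⊗ₜ[F] r) * z - z * ((1:A) ⊗ₜ[F] r)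
          = (1:A) ⊗ₜ[F] (r * (∑ i, c i • b i) - (∑ i, c i • b i) * r) := by
        rw [TensorProduct.tmul_sub]
        congr 1
        · rw [hzrep, Finset.mul_sum, Finset.mul_sum, TensorProduct.tmul_sum]
          refine Finset.sum_congr rfl fun i _ => ?_
          simp only [hc i, Algebra.TensorProduct.tmul_mul_tmul, one_mul, mul_one,
            Algebra.algebraMap_eq_smul_one, ← TensorProduct.smul_tmul', mul_smul_comm,
            smul_mul_assoc, TensorProduct.tmul_smul]
        · rw [hzrep, Finset.sum_mul, Finset.sum_mul, TensorProduct.tmul_sum]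
          refine Finset.sum_congr rfl fun i _ => ?_
          simp only [hc i, Algebra.TensorProduct.tmul_mul_tmul, one_mul, mul_one,
            Algebra.algebraMap_eq_smul_one, ← TensorProduct.smul_tmul', mul_smul_comm,
            smul_mul_assoc, TensorProduct.tmul_smul]
      rw [h0] at h1
      by_contra hne
      exact aux_tmul_ne_zero one_ne_zero (sub_ne_zero.2 hne) h1.symm
    · -- z = 1 ⊗ bs
      rw [hzrep, TensorProduct.tmul_sum]
      refine Finset.sum_congr rfl fun i _ => ?_
      rw [hc i, Algebra.algebraMap_eq_smul_one, ← TensorProduct.smul_tmul',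
        ← TensorProduct.tmul_smul]
  · rintro ⟨b, hbc, hb1, rfl⟩
    have hbc' := Subalgebra.mem_center_iff.1 hbc
    constructor
    · refine Subalgebra.mem_center_iff.2 fun w => ?_
      induction w using TensorProduct.induction_on with
      | zero => rw [zero_mul, mul_zero]
      | tmul x yy =>
        rw [Algebra.TensorProduct.tmul_mul_tmul, Algebra.TensorProduct.tmul_mul_tmul,
          one_mul, mul_one, hbc' yy]
      | add u v hu hv => rw [add_mul, mul_add, hu, hv]
    · exact Submodule.subset_span ⟨1, honeA, b, hb1, rfl⟩

end center

/-- If `A` is a `G₁`-central-simple algebra over `F` (finite dimensional,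
`G₁`-simple, with `Z(A)_e = F`) and `B` is a `G₂`-simple unital `F`-algebra,
then `A ⊗_F B` is `G₁ × G₂`-simple and `Z(A ⊗ B)_e = Z(B)_e`. -/
theorem tensor_gcentral_simple
    {G₁ G₂ : Type*} [Group G₁] [Group G₂] [DecidableEq G₁] [DecidableEq G₂]
    {F : Type*} [Field F]
    {A : Type*} [Ring A] [Algebra F A]
    (𝒜 : G₁ → Submodule F A) [DirectSum.Decomposition 𝒜]
    (honeA : (1 : A) ∈ 𝒜 1)
    (hmulA : ∀ {g h : G₁}, ∀ a ∈ 𝒜 g, ∀ b ∈ 𝒜 h, a * b ∈ 𝒜 (g * h))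
    [FiniteDimensional F A]
    (hA2 : ∃ a b : A, a * b ≠ 0)
    (hAsimple : ∀ I : TwoSidedIdeal A,
      (∀ a ∈ I, ∀ g : G₁, (DirectSum.decompose 𝒜 a g : A) ∈ I) → I = ⊥ ∨ I = ⊤)
    -- `A` is central: `Z(A)_e = F`
    (hAcentral : ∀ a : A, a ∈ Subalgebra.center F A → a ∈ 𝒜 1 →
      ∃ c : F, a = algebraMap F A c)
    {B : Type*} [Ring B] [Algebra F B]
    (ℬ : G₂ → Submodule F B) [DirectSum.Decomposition ℬ]
    (honeB : (1 : B) ∈ ℬ 1)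
    (hmulB : ∀ {g h : G₂}, ∀ a ∈ ℬ g, ∀ b ∈ ℬ h, a * b ∈ ℬ (g * h))
    (hB2 : ∃ a b : B, a * b ≠ 0)
    (hBsimple : ∀ I : TwoSidedIdeal B,
      (∀ a ∈ I, ∀ g : G₂, (DirectSum.decompose ℬ a g : B) ∈ I) → I = ⊥ ∨ I = ⊤) :
    -- `A ⊗ B` is `G₁ × G₂`-simple
    ((∃ x y : A ⊗[F] B, x * y ≠ 0) ∧
      ∀ I : TwoSidedIdeal (A ⊗[F] B),
        (∀ x ∈ I, x ∈ Submodule.span F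
          {y : A ⊗[F] B | y ∈ I ∧ ∃ g : G₁ × G₂, y ∈ tensorGrading 𝒜 ℬ g}) →
        I = ⊥ ∨ I = ⊤) ∧
    -- `Z(A ⊗ B)_e = Z(B)_e`
    (∀ z : A ⊗[F] B,
      (z ∈ Subalgebra.center F (A ⊗[F] B) ∧ z ∈ tensorGrading 𝒜 ℬ 1) ↔
        ∃ b : B, b ∈ Subalgebra.center F B ∧ b ∈ ℬ 1 ∧ z = 1 ⊗ₜ[F] b) := by
  classical
  obtain ⟨a0, b0, hab0⟩ := hA2
  obtain ⟨c0, d0, hcd0⟩ := hB2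
  refine ⟨⟨⟨a0 ⊗ₜ[F] c0, b0 ⊗ₜ[F] d0, ?_⟩,
    fun I hI => aux_simple 𝒜 honeA hmulA ⟨a0, b0, hab0⟩ hAsimple hAcentral ℬ honeB
      hBsimple I hI⟩,
    fun z => aux_center 𝒜 honeA ⟨a0, b0, hab0⟩ hAcentral ℬ z⟩
  rw [Algebra.TensorProduct.tmul_mul_tmul]
  exact aux_tmul_ne_zero hab0 hcd0
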